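/- The function θ₀(R) = (−1 + 8R⁴·log R + R⁸)/(16·R^{3/2}·(1+R⁴)) satisfies −θ₀''(R) + (15/(4R²))·θ₀(R) − (32R²/(1+R⁴)²)·θ₀(R) = 0 for all R > 0. -/

import Mathlib

/-! On `R > 0` write `θ₀ = R^(-3/2) · g` with `g = (-1 + 8R⁴ log R + R⁸) / (16 (1 + R⁴))`.
Conjugating by `R^a` turns `-∂² + a(a-1)/R²` into `-∂² - (2a/R) ∂`, and for `a = -3/2` we have
`a(a-1) = 15/4`, so the equation for `θ₀` becomes `-g'' + 3g'/R - 32R²/(1+R⁴)² g = 0`.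
With `g' = R³(8 log R + 3 + 4R⁴ + R⁸) / (4(1+R⁴)²)` this is an identity of rational functions
in `R` and `log R`. -/

noncomputable def theta0 (R : ℝ) : ℝ :=
  (-1 + 8 * R ^ 4 * Real.log R + R ^ 8) / (16 * R ^ ((3 : ℝ) / 2) * (1 + R ^ 4))

open Filter Topology

lemma deriv_deriv_rpow_mul {a x : ℝ} {g : ℝ → ℝ} (hx : 0 < x)
    (hg : ∀ᶠ y in 𝓝 x, DifferentiableAt ℝ g y) (hg' : DifferentiableAt ℝ (deriv g) x) :
    deriv (deriv fun y => y ^ a * g y) x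
      = x ^ a * (a * (a - 1) / x ^ 2 * g x + 2 * a / x * deriv g x + deriv (deriv g) x) := by
  have hpow {y : ℝ} (hy : 0 < y) : HasDerivAt (fun y => y ^ a) (a * y ^ (a - 1)) y :=
    Real.hasDerivAt_rpow_const (Or.inl hy.ne')
  have hpow' : HasDerivAt (fun y => y ^ (a - 1)) ((a - 1) * x ^ (a - 1 - 1)) x :=
    Real.hasDerivAt_rpow_const (Or.inl hx.ne')
  have hfirst : deriv (fun y => y ^ a * g y)
      =ᶠ[𝓝 x] fun y => a * y ^ (a - 1) * g y + y ^ a * deriv g y := by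
    filter_upwards [hg, Ioi_mem_nhds hx] with y hgy hy
    exact ((hpow hy).mul hgy.hasDerivAt).deriv
  have hsecond : HasDerivAt (fun y => a * y ^ (a - 1) * g y + y ^ a * deriv g y) _ x :=
    ((hpow'.const_mul a).mul hg.self_of_nhds.hasDerivAt).add ((hpow hx).mul hg'.hasDerivAt)
  rw [hfirst.deriv_eq, hsecond.deriv, sub_sub, one_add_one_eq_two, Real.rpow_sub hx,
    Real.rpow_sub_one hx.ne', Real.rpow_two]
  ring

noncomputable def theta0Profile (R : ℝ) : ℝ :=
  (-1 + 8 * R ^ 4 * Real.log R + R ^ 8) / (16 * (1 + R ^ 4))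

lemma theta0_eq_rpow_mul_theta0Profile {R : ℝ} (hR : 0 < R) :
    theta0 R = R ^ (-(3 / 2) : ℝ) * theta0Profile R := by
  rw [theta0, theta0Profile, Real.rpow_neg hR.le]
  field_simp

lemma hasDerivAt_theta0Profile {R : ℝ} (hR : 0 < R) :
    HasDerivAt theta0Profile
      (R ^ 3 * (8 * Real.log R + 3 + 4 * R ^ 4 + R ^ 8) / (4 * (1 + R ^ 4) ^ 2)) R := by
  have hnum : HasDerivAt (fun x => -1 + 8 * x ^ 4 * Real.log x + x ^ 8)
      (8 * (4 * R ^ 3) * Real.log R + 8 * R ^ 4 * R⁻¹ + 8 * R ^ 7) R := by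
    refine (((((hasDerivAt_pow 4 R).const_mul 8).mul (Real.hasDerivAt_log hR.ne')).const_add
      (-1)).add (hasDerivAt_pow 8 R)).congr_deriv ?_
    push_cast
    ring
  have hden : HasDerivAt (fun x => 16 * (1 + x ^ 4)) (16 * (4 * R ^ 3)) R := by
    simpa using ((hasDerivAt_pow 4 R).const_add 1).const_mul 16
  refine (hnum.div hden (by positivity)).congr_deriv ?_
  field_simp
  ring

lemma deriv_theta0Profile {R : ℝ} (hR : 0 < R) :
    deriv theta0Profile R
      = R ^ 3 * (8 * Real.log R + 3 + 4 * R ^ 4 + R ^ 8) / (4 * (1 + R ^ 4) ^ 2) :=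
  (hasDerivAt_theta0Profile hR).deriv

lemma hasDerivAt_deriv_theta0Profile {R : ℝ} (hR : 0 < R) :
    HasDerivAt (deriv theta0Profile)
      (R ^ 2 * (24 * Real.log R - 40 * R ^ 4 * Real.log R + 17 + 21 * R ^ 4 + 7 * R ^ 8
        + 3 * R ^ 12) / (4 * (1 + R ^ 4) ^ 3)) R := by
  have hnum : HasDerivAt (fun x => x ^ 3 * (8 * Real.log x + 3 + 4 * x ^ 4 + x ^ 8))
      (3 * R ^ 2 * (8 * Real.log R + 3 + 4 * R ^ 4 + R ^ 8)
        + R ^ 3 * (8 * R⁻¹ + 4 * (4 * R ^ 3) + 8 * R ^ 7)) R := by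
    refine ((hasDerivAt_pow 3 R).mul
      (((((Real.hasDerivAt_log hR.ne').const_mul 8).add_const 3).add
        ((hasDerivAt_pow 4 R).const_mul 4)).add (hasDerivAt_pow 8 R))).congr_deriv ?_
    simp only [Pi.add_apply]
    push_cast
    ring
  have hden : HasDerivAt (fun x => 4 * (1 + x ^ 4) ^ 2)
      (4 * (2 * (1 + R ^ 4) * (4 * R ^ 3))) R := by
    simpa using (((hasDerivAt_pow 4 R).const_add 1).pow 2).const_mul 4
  have hderiv : deriv theta0Profile =ᶠ[𝓝 R]
      fun x => x ^ 3 * (8 * Real.log x + 3 + 4 * x ^ 4 + x ^ 8) / (4 * (1 + x ^ 4) ^ 2) := by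
    filter_upwards [Ioi_mem_nhds hR] with x hx using deriv_theta0Profile hx
  refine (hnum.div hden (by positivity)).congr_of_eventuallyEq hderiv |>.congr_deriv ?_
  field_simp
  ring

lemma theta0Profile_ode {R : ℝ} (hR : 0 < R) :
    -(deriv (deriv theta0Profile) R) + 3 / R * deriv theta0Profile R
      - 32 * R ^ 2 / (1 + R ^ 4) ^ 2 * theta0Profile R = 0 := by
  rw [(hasDerivAt_deriv_theta0Profile hR).deriv, deriv_theta0Profile hR, theta0Profile]
  field_simp
  ring

theorem theta0_zero_mode :
    ∀ R : ℝ, 0 < R →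
      -(deriv (deriv theta0) R) + (15 / (4 * R ^ 2)) * theta0 R
        - (32 * R ^ 2 / (1 + R ^ 4) ^ 2) * theta0 R = 0 := by
  intro R hR
  have hθ : theta0 =ᶠ[𝓝 R] fun x => x ^ (-(3 / 2) : ℝ) * theta0Profile x := by
    filter_upwards [Ioi_mem_nhds hR] with x hx using theta0_eq_rpow_mul_theta0Profile hx
  have hdiff : ∀ᶠ x in 𝓝 R, DifferentiableAt ℝ theta0Profile x := by
    filter_upwards [Ioi_mem_nhds hR] with x hx using (hasDerivAt_theta0Profile hx).differentiableAt
  rw [hθ.deriv.deriv_eq, deriv_deriv_rpow_mul hR hdiff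
    (hasDerivAt_deriv_theta0Profile hR).differentiableAt, theta0_eq_rpow_mul_theta0Profile hR]
  linear_combination R ^ (-(3 / 2) : ℝ) * theta0Profile_ode hR
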